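/- Let n ≥ 1 and let p(·) ∈ C^log(ℝⁿ) be a variable exponent with 0 < p₋ ≤ p₊ < ∞. If g is a measurable function on ℝ^{n+1}_+ with compact support in ℝ^{n+1}_+ and g ∈ T_2^{p(·)}(ℝ^{n+1}_+), then g ∈ T_2^2(ℝ^{n+1}_+), i.e., ∫∫_{ℝ^{n+1}_+} |g(x,t)|² dx dt/t < ∞. -/

import Mathlib

open MeasureTheory ENNReal Metric

noncomputable section

/-- The Luxemburg quasi-norm of the variable exponent Lebesgue space `L^{p(·)}(ℝⁿ)`,
applied to an `ℝ≥0∞`-valued function. -/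
def vnorm {n : ℕ} (p : EuclideanSpace ℝ (Fin n) → ℝ) (f : EuclideanSpace ℝ (Fin n) → ℝ≥0∞) : ℝ≥0∞ :=
  sInf {lam : ℝ≥0∞ | 0 < lam ∧ lam ≠ ⊤ ∧ ∫⁻ x, (f x / lam) ^ (p x) ∂volume ≤ 1}

/-- The globally log-Hölder continuity condition `p(·) ∈ C^log(ℝⁿ)`. -/
def LogHolder {n : ℕ} (p : EuclideanSpace ℝ (Fin n) → ℝ) : Prop :=
  (∃ C : ℝ, 0 < C ∧ ∀ x y : EuclideanSpace ℝ (Fin n),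
    |p x - p y| ≤ C / Real.log (Real.exp 1 + 1 / dist x y)) ∧
  (∃ C : ℝ, 0 < C ∧ ∃ pinf : ℝ, ∀ x : EuclideanSpace ℝ (Fin n),
    |p x - pinf| ≤ C / Real.log (Real.exp 1 + ‖x‖))

/-- The tent-space square function `𝒯(g)(x)` of a function on `ℝ^(n+1)_+`. -/
def tcal {n : ℕ} (g : EuclideanSpace ℝ (Fin n) × ℝ → ℝ) (x : EuclideanSpace ℝ (Fin n)) : ℝ≥0∞ :=
  (∫⁻ q in {q : EuclideanSpace ℝ (Fin n) × ℝ | 0 < q.2 ∧ dist q.1 x < q.2},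
      ENNReal.ofReal (|g q| ^ 2 / q.2 ^ (n + 1)) ∂volume) ^ ((1 : ℝ) / 2)

/-- a compactly supported element of the variable tent space
`T_2^(p(·))(ℝ^(n+1)_+)` belongs to `T_2^2(ℝ^(n+1)_+)`. -/
theorem stmt19 (n : ℕ) (hn : 1 ≤ n)
    (p : EuclideanSpace ℝ (Fin n) → ℝ) (hp : Measurable p) (hplog : LogHolder p)
    (pm pp : ℝ)
    (hpm : pm = essInf p (volume : Measure (EuclideanSpace ℝ (Fin n))))
    (hpp : pp = essSup p (volume : Measure (EuclideanSpace ℝ (Fin n))))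
    (hpm_pos : 0 < pm) (hpmpp : pm ≤ pp)
    (hbdd : ∀ᵐ x ∂(volume : Measure (EuclideanSpace ℝ (Fin n))), p x ≤ pp)
    (g : EuclideanSpace ℝ (Fin n) × ℝ → ℝ) (hg : Measurable g)
    (hsupp : ∃ Kc : Set (EuclideanSpace ℝ (Fin n) × ℝ), IsCompact Kc ∧ Kc ⊆ {q : EuclideanSpace ℝ (Fin n) × ℝ | 0 < q.2} ∧
      Function.support g ⊆ Kc)
    (hgT : vnorm p (tcal g) < ⊤) :
    (∫⁻ q in {q : EuclideanSpace ℝ (Fin n) × ℝ | 0 < q.2}, ENNReal.ofReal (|g q| ^ 2 / q.2) ∂volume) < ⊤ := by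
  classical
  obtain ⟨K, hK, hKpos, hKsupp⟩ := hsupp
  -- a.e. positivity of p
  have hppos : ∀ᵐ x ∂(volume : Measure (EuclideanSpace ℝ (Fin n))), 0 < p x := by
    have h := essInf_eq_sSup (volume : Measure (EuclideanSpace ℝ (Fin n))) p
    rw [← hpm] at h
    obtain ⟨a, haS, ha⟩ : ∃ a ∈ {a : ℝ | volume {x | p x < a} = 0}, 0 < a := by
      by_contra hc
      push_neg at hc
      have : pm ≤ 0 := h ▸ Real.sSup_le (fun x hx => hc x hx) le_rfl
      linarith
    have hae : ∀ᵐ x ∂(volume : Measure (EuclideanSpace ℝ (Fin n))), ¬ p x < a := by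
      rw [ae_iff]; push_neg; simpa using haS
    filter_upwards [hae] with x hx
    exact lt_of_lt_of_le ha (not_lt.mp hx)
  -- get lam from hgT
  obtain ⟨lam, ⟨hlam0, hlamtop, hlamint⟩, -⟩ :
      ∃ lam ∈ {lam : ℝ≥0∞ | 0 < lam ∧ lam ≠ ⊤ ∧ ∫⁻ x, (tcal g x / lam) ^ (p x) ∂volume ≤ 1},
        lam < ⊤ := sInf_lt_iff.mp hgT
  -- dispose of the case g ≡ 0 (when K is empty) later; main case:
  rcases K.eq_empty_or_nonempty with hKe | hKne
  · have hg0 : ∀ q : EuclideanSpace ℝ (Fin n) × ℝ, g q = 0 := by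
      intro q
      by_contra hgq
      have := hKsupp (Function.mem_support.2 hgq)
      simp [hKe] at this
    have h0 : (∫⁻ q in {q : EuclideanSpace ℝ (Fin n) × ℝ | 0 < q.2},
        ENNReal.ofReal (|g q| ^ 2 / q.2) ∂volume) = 0 := by
      simp [hg0]
    rw [h0]
    exact ENNReal.zero_lt_top
  -- bounds a ≤ t ≤ b on K
  obtain ⟨qa, hqaK, hqa⟩ := hK.exists_isMinOn hKne continuous_snd.continuousOn
  obtain ⟨qb, hqbK, hqb⟩ := hK.exists_isMaxOn hKne continuous_snd.continuousOn
  set a := qa.2 with ha_def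
  set b := qb.2 with hb_def
  have ha : 0 < a := hKpos hqaK
  have hb : 0 < b := hKpos hqbK
  -- finite subcover by balls of radius a/2
  have hcov : K ⊆ ⋃ q ∈ K, Metric.ball q (a / 2) := by
    intro q hq
    exact Set.mem_biUnion hq (Metric.mem_ball_self (by linarith))
  obtain ⟨s, hsK, hsfin, hscov⟩ :=
    hK.elim_finite_subcover_image (fun q _ => Metric.isOpen_ball) hcov
  -- key: each piece has finite integral of |g|^2 / t^(n+1)
  have key : ∀ q0 ∈ s,
      (∫⁻ q in K ∩ Metric.ball q0 (a / 2),
        ENNReal.ofReal (|g q| ^ 2 / q.2 ^ (n + 1)) ∂volume) ≠ ⊤ := by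
    intro q0 hq0
    intro hinf
    -- every x in ball q0.1 (a/2) has the piece inside its cone
    have hsub : ∀ x ∈ Metric.ball q0.1 (a / 2),
        K ∩ Metric.ball q0 (a / 2) ⊆
          {q : EuclideanSpace ℝ (Fin n) × ℝ | 0 < q.2 ∧ dist q.1 x < q.2} := by
      intro x hx q hq
      obtain ⟨hqK, hqb2⟩ := hq
      refine ⟨hKpos hqK, ?_⟩
      have h1 : dist q.1 q0.1 < a / 2 :=
        lt_of_le_of_lt (le_max_left _ _ |>.trans_eq (Prod.dist_eq (x := q) (y := q0)).symm) hqb2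
      have h2 : dist x q0.1 < a / 2 := hx
      have h3 : a ≤ q.2 := hqa hqK
      calc dist q.1 x ≤ dist q.1 q0.1 + dist q0.1 x := dist_triangle _ _ _
        _ < a / 2 + a / 2 := by rw [dist_comm q0.1 x]; linarith
        _ = a := by ring
        _ ≤ q.2 := h3
    have htop : ∀ x ∈ Metric.ball q0.1 (a / 2), tcal g x = ⊤ := by
      intro x hx
      have hmono := lintegral_mono_set (μ := (volume : Measure (EuclideanSpace ℝ (Fin n) × ℝ)))
        (f := fun q => ENNReal.ofReal (|g q| ^ 2 / q.2 ^ (n + 1))) (hsub x hx)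
      rw [hinf, top_le_iff] at hmono
      rw [tcal, hmono]
      exact ENNReal.top_rpow_of_pos (by norm_num)
    -- hence the modular integral is infinite on a ball of positive measure
    have hballpos : 0 < volume (Metric.ball q0.1 (a / 2)) :=
      Metric.measure_ball_pos _ _ (by linarith)
    have : (∫⁻ x in Metric.ball q0.1 (a / 2), (tcal g x / lam) ^ (p x) ∂volume) = ⊤ := by
      have hcong : (fun x => (tcal g x / lam) ^ (p x)) =ᵐ[volume.restrict (Metric.ball q0.1 (a / 2))]
          (fun _ => (⊤ : ℝ≥0∞)) := by
        filter_upwards [ae_restrict_of_ae hppos,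
          ae_restrict_mem Metric.isOpen_ball.measurableSet] with x hpx hxball
        rw [htop x hxball, ENNReal.top_div_of_ne_top hlamtop]
        exact ENNReal.top_rpow_of_pos hpx
      rw [lintegral_congr_ae hcong, setLIntegral_const]
      exact ENNReal.top_mul hballpos.ne'
    have hle : (∫⁻ x in Metric.ball q0.1 (a / 2), (tcal g x / lam) ^ (p x) ∂volume) ≤
        ∫⁻ x, (tcal g x / lam) ^ (p x) ∂volume := setLIntegral_le_lintegral _ _
    rw [this, top_le_iff] at hle
    rw [hle] at hlamint
    exact absurd hlamint (by simp)
  -- pointwise bound toward the final integral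
  have hptwise : ∀ q : EuclideanSpace ℝ (Fin n) × ℝ,
      ENNReal.ofReal (|g q| ^ 2 / q.2) ≤
        K.indicator (fun q => ENNReal.ofReal (b ^ n) * ENNReal.ofReal (|g q| ^ 2 / q.2 ^ (n + 1))) q := by
    intro q
    by_cases hqK : q ∈ K
    · rw [Set.indicator_of_mem hqK]
      have ht0 : 0 < q.2 := hKpos hqK
      have htb : q.2 ≤ b := hqb hqK
      rw [← ENNReal.ofReal_mul (by positivity)]
      apply ENNReal.ofReal_le_ofReal
      have hqn : q.2 ^ n ≤ b ^ n := pow_le_pow_left₀ ht0.le htb n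
      have hrw : |g q| ^ 2 / q.2 = |g q| ^ 2 * q.2 ^ n / q.2 ^ (n + 1) := by
        rw [div_eq_div_iff ht0.ne' (by positivity : q.2 ^ (n + 1) ≠ 0)]
        ring
      rw [hrw]
      calc |g q| ^ 2 * q.2 ^ n / q.2 ^ (n + 1) ≤ |g q| ^ 2 * b ^ n / q.2 ^ (n + 1) := by
            gcongr
        _ = b ^ n * (|g q| ^ 2 / q.2 ^ (n + 1)) := by ring
    · rw [Set.indicator_of_notMem hqK]
      have : g q = 0 := by
        by_contra hgq
        exact hqK (hKsupp (Function.mem_support.2 hgq))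
      simp [this]
  -- now finish
  have hfin : (∫⁻ q in K, ENNReal.ofReal (|g q| ^ 2 / q.2 ^ (n + 1)) ∂volume) ≠ ⊤ := by
    have hKsub : K ⊆ ⋃ q0 ∈ hsfin.toFinset, (K ∩ Metric.ball q0 (a / 2)) := by
      intro q hq
      obtain ⟨q0, hq0s, hq0b⟩ := Set.mem_iUnion₂.mp (hscov hq)
      exact Set.mem_iUnion₂.mpr ⟨q0, hsfin.mem_toFinset.mpr hq0s, hq, hq0b⟩
    have h1 : (∫⁻ q in K, ENNReal.ofReal (|g q| ^ 2 / q.2 ^ (n + 1)) ∂volume) ≤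
        ∑ q0 ∈ hsfin.toFinset, ∫⁻ q in K ∩ Metric.ball q0 (a / 2),
          ENNReal.ofReal (|g q| ^ 2 / q.2 ^ (n + 1)) ∂volume := by
      refine le_trans (lintegral_mono_set hKsub) ?_
      classical
      induction hsfin.toFinset using Finset.induction with
      | empty => simp
      | @insert a s hni ih =>
        rw [Finset.set_biUnion_insert, Finset.sum_insert hni]
        exact le_trans (lintegral_union_le _ _ _) (add_le_add le_rfl ih)
    refine ne_top_of_le_ne_top ?_ h1
    exact (ENNReal.sum_lt_top.mpr fun q0 hq0 =>
      lt_top_iff_ne_top.mpr (key q0 (hsfin.mem_toFinset.mp hq0))).ne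
  calc (∫⁻ q in {q : EuclideanSpace ℝ (Fin n) × ℝ | 0 < q.2}, ENNReal.ofReal (|g q| ^ 2 / q.2) ∂volume)
      ≤ ∫⁻ q in {q : EuclideanSpace ℝ (Fin n) × ℝ | 0 < q.2},
          K.indicator (fun q => ENNReal.ofReal (b ^ n) * ENNReal.ofReal (|g q| ^ 2 / q.2 ^ (n + 1))) q ∂volume :=
        lintegral_mono hptwise
    _ ≤ ∫⁻ q, K.indicator (fun q => ENNReal.ofReal (b ^ n) * ENNReal.ofReal (|g q| ^ 2 / q.2 ^ (n + 1))) q ∂volume :=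
        setLIntegral_le_lintegral _ _
    _ = ∫⁻ q in K, ENNReal.ofReal (b ^ n) * ENNReal.ofReal (|g q| ^ 2 / q.2 ^ (n + 1)) ∂volume :=
        lintegral_indicator hK.measurableSet _
    _ = ENNReal.ofReal (b ^ n) * ∫⁻ q in K, ENNReal.ofReal (|g q| ^ 2 / q.2 ^ (n + 1)) ∂volume :=
        lintegral_const_mul' _ _ ENNReal.ofReal_ne_top
    _ < ⊤ := ENNReal.mul_lt_top ENNReal.ofReal_lt_top (lt_top_iff_ne_top.mpr hfin)


end
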